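/- arXiv:2102.00137 — 2 statements merged into one kernel-verified Lean document; each statement's English description precedes it below -/
import Mathlib

section
/- For every odd positive integer m, every nonnegative integer n, every real x, and every real μ with μ ≠ 1 (taking λ = 1 − μ ≠ 0): Σ_{k=0}^{m−1} (−1)^k 𝔙_n((x+k)/m; 1−μ; μ) = ((1−m)/m^n) · ((μ−2)/(2(μ−1))) · E_n(x) + (1/m^{n−1}) · 𝔙_n(x; 1−μ; μ). -/
set_option maxHeartbeats 1000000


open PowerSeries Finset

/-- `V n x` are the unified Apostol Bernoulli–Euler polynomials `𝔙_n(x;λ;μ)`: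
`(2−μ+(μ/2)t) e^{xt} = (λ e^t + (1−μ)) · Σ 𝔙_n(x;λ;μ) t^n/n!` as formal power series over ℝ. -/
def IsUnifiedApostolBE (lam mu : ℝ) (V : ℕ → ℝ → ℝ) : Prop :=
  ∀ x : ℝ,
    (PowerSeries.C (R := ℝ) lam * PowerSeries.exp ℝ + PowerSeries.C (R := ℝ) (1 - mu)) *
        PowerSeries.mk (fun n => V n x / n.factorial) =
      (PowerSeries.C (R := ℝ) (2 - mu) + PowerSeries.C (R := ℝ) (mu / 2) * PowerSeries.X) *
        PowerSeries.rescale x (PowerSeries.exp ℝ)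

/-- `E n x` are the classical Euler polynomials:
`2 e^{xt} = (e^t + 1) · Σ E_n(x) t^n/n!` as formal power series over ℝ. -/
def IsEulerPoly (E : ℕ → ℝ → ℝ) : Prop :=
  ∀ x : ℝ,
    (PowerSeries.exp ℝ + 1) * PowerSeries.mk (fun n => E n x / n.factorial) =
      PowerSeries.C (R := ℝ) 2 * PowerSeries.rescale x (PowerSeries.exp ℝ)

private lemma rescale_C' (a r : ℝ) : rescale a (C (R := ℝ) r) = C (R := ℝ) r := by
  ext n
  rw [coeff_rescale, coeff_C]
  split <;> simp_all

private lemma exp_pow_add_one_ne (j : ℕ) : (exp ℝ) ^ j + 1 ≠ 0 := by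
  intro h
  have := congrArg (constantCoeff (R := ℝ)) h
  simp [map_pow, constantCoeff_exp] at this

/-- Euler multiplication theorem for odd `m`. -/
private lemma euler_mult (E : ℕ → ℝ → ℝ) (hE : IsEulerPoly E)
    (m : ℕ) (hm : 0 < m) (hodd : Odd m) (n : ℕ) (x : ℝ) :
    ∑ k ∈ Finset.range m, (-1 : ℝ) ^ k * E n ((x + k) / m) = E n x / (m : ℝ) ^ n := by
  have hm0 : (m : ℝ) ≠ 0 := Nat.cast_ne_zero.mpr hm.ne'
  have h1 : ∀ k : ℕ,
      ((exp ℝ) ^ m + 1) * rescale (m : ℝ) (mk fun j => E j ((x + k) / m) / j.factorial)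
        = C (R := ℝ) 2 * rescale x (exp ℝ) * (exp ℝ) ^ k := by
    intro k
    have h := congrArg (fun p => rescale (m : ℝ) p) (hE ((x + k) / m))
    simp only [map_mul, map_add, map_one, rescale_rescale, rescale_C'] at h
    rw [div_mul_cancel₀ _ hm0, ← exp_mul_exp_eq_exp_add, ← exp_pow_eq_rescale_exp,
      ← exp_pow_eq_rescale_exp] at h
    rw [h]
    ring
  have h2 : (exp ℝ + 1) * ∑ k ∈ Finset.range m, (-(exp ℝ)) ^ k = (exp ℝ) ^ m + 1 := by
    have h3 := geom_sum_mul (-(exp ℝ)) m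
    rw [hodd.neg_pow] at h3
    linear_combination -h3
  have key : ((exp ℝ) ^ m + 1) * ((exp ℝ + 1) *
        ∑ k ∈ Finset.range m, (-1 : ℝ⟦X⟧) ^ k *
          rescale (m : ℝ) (mk fun j => E j ((x + k) / m) / j.factorial))
      = ((exp ℝ) ^ m + 1) * ((exp ℝ + 1) * mk fun j => E j x / j.factorial) := by
    have step1 : ∑ k ∈ Finset.range m, ((exp ℝ) ^ m + 1) * ((-1 : ℝ⟦X⟧) ^ k *
          rescale (m : ℝ) (mk fun j => E j ((x + k) / m) / j.factorial))
        = C (R := ℝ) 2 * rescale x (exp ℝ) * ∑ k ∈ Finset.range m, (-(exp ℝ)) ^ k := by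
      rw [Finset.mul_sum]
      refine Finset.sum_congr rfl fun k _ => ?_
      rw [mul_left_comm, h1 k]
      ring
    calc ((exp ℝ) ^ m + 1) * ((exp ℝ + 1) *
          ∑ k ∈ Finset.range m, (-1 : ℝ⟦X⟧) ^ k *
            rescale (m : ℝ) (mk fun j => E j ((x + k) / m) / j.factorial))
        = (exp ℝ + 1) * ∑ k ∈ Finset.range m, ((exp ℝ) ^ m + 1) * ((-1 : ℝ⟦X⟧) ^ k *
            rescale (m : ℝ) (mk fun j => E j ((x + k) / m) / j.factorial)) := by
          rw [← Finset.mul_sum]; ring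
      _ = (exp ℝ + 1) * (C (R := ℝ) 2 * rescale x (exp ℝ) * ∑ k ∈ Finset.range m, (-(exp ℝ)) ^ k) := by
          rw [step1]
      _ = C (R := ℝ) 2 * rescale x (exp ℝ) * ((exp ℝ + 1) * ∑ k ∈ Finset.range m, (-(exp ℝ)) ^ k) := by
          ring
      _ = C (R := ℝ) 2 * rescale x (exp ℝ) * ((exp ℝ) ^ m + 1) := by rw [h2]
      _ = ((exp ℝ) ^ m + 1) * ((exp ℝ + 1) * mk fun j => E j x / j.factorial) := by
          rw [hE x]; ring
  have key2 : (∑ k ∈ Finset.range m, (-1 : ℝ⟦X⟧) ^ k *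
        rescale (m : ℝ) (mk fun j => E j ((x + k) / m) / j.factorial))
      = mk fun j => E j x / j.factorial := by
    have e1 := mul_left_cancel₀ (exp_pow_add_one_ne m) key
    exact mul_left_cancel₀ (by simpa using exp_pow_add_one_ne 1) e1
  have hc := congrArg (coeff (R := ℝ) n) key2
  have hco : ∀ (f : ℝ⟦X⟧) (k : ℕ),
      coeff (R := ℝ) n ((-1 : ℝ⟦X⟧) ^ k * f) = (-1 : ℝ) ^ k * coeff (R := ℝ) n f := by
    intro f k
    have : ((-1 : ℝ⟦X⟧)) ^ k = C (R := ℝ) ((-1 : ℝ) ^ k) := by rw [map_pow, map_neg, map_one]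
    rw [this, coeff_C_mul]
  simp only [map_sum, hco, coeff_rescale, coeff_mk] at hc
  have hfac : ((n.factorial : ℝ)) ≠ 0 := Nat.cast_ne_zero.mpr n.factorial_ne_zero
  have hmn : ((m : ℝ)) ^ n ≠ 0 := pow_ne_zero _ hm0
  calc ∑ k ∈ Finset.range m, (-1 : ℝ) ^ k * E n ((x + k) / m)
      = (∑ k ∈ Finset.range m, (-1 : ℝ) ^ k * ((m : ℝ) ^ n * (E n ((x + k) / m) / n.factorial)))
          * n.factorial / (m : ℝ) ^ n := by
        rw [Finset.sum_mul, Finset.sum_div]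
        refine Finset.sum_congr rfl fun k _ => ?_
        field_simp
    _ = (E n x / n.factorial) * n.factorial / (m : ℝ) ^ n := by rw [hc]
    _ = E n x / (m : ℝ) ^ n := by field_simp

/-- The unified polynomials in terms of Euler polynomials. -/
private lemma V_eq_euler (mu : ℝ) (hmu1 : mu ≠ 1)
    (V : ℕ → ℝ → ℝ) (hV : IsUnifiedApostolBE (1 - mu) mu V)
    (E : ℕ → ℝ → ℝ) (hE : IsEulerPoly E) (n : ℕ) (y : ℝ) :
    V n y = (mu - 2) / (2 * (mu - 1)) * E n y + mu / (4 * (1 - mu)) * n * E (n - 1) y := by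
  have hlam : (1 : ℝ) - mu ≠ 0 := sub_ne_zero.mpr (fun h => hmu1 h.symm)
  have hlam' : mu - 1 ≠ 0 := fun h => hlam (by linarith [sub_eq_zero.mp h])
  set c : ℝ := (mu - 2) / (2 * (mu - 1)) with hcdef
  set d : ℝ := mu / (4 * (1 - mu)) with hddef
  have hne : C (R := ℝ) (1 - mu) * (exp ℝ + 1) ≠ 0 := by
    apply mul_ne_zero
    · intro h
      exact hlam (by simpa using congrArg (constantCoeff (R := ℝ)) h)
    · simpa using exp_pow_add_one_ne 1
  have hc1 : (2 : ℝ) * (1 - mu) * c = 2 - mu := by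
    rw [hcdef]; field_simp; ring
  have hc2 : (2 : ℝ) * (1 - mu) * d = mu / 2 := by
    rw [hddef]; field_simp; ring
  have hkey : (PowerSeries.mk fun j => V j y / j.factorial) =
      (C (R := ℝ) c + C (R := ℝ) d * X) * (PowerSeries.mk fun j => E j y / j.factorial) := by
    apply mul_left_cancel₀ hne
    calc C (R := ℝ) (1 - mu) * (exp ℝ + 1) * PowerSeries.mk (fun j => V j y / j.factorial)
        = (C (R := ℝ) (1 - mu) * exp ℝ + C (R := ℝ) (1 - mu)) * PowerSeries.mk (fun j => V j y / j.factorial) := by ring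
      _ = (C (R := ℝ) (2 - mu) + C (R := ℝ) (mu / 2) * X) * rescale y (exp ℝ) := hV y
      _ = (C (R := ℝ) (2 * (1 - mu) * c) + C (R := ℝ) (2 * (1 - mu) * d) * X) * rescale y (exp ℝ) := by
          rw [hc1, hc2]
      _ = C (R := ℝ) (1 - mu) * ((C (R := ℝ) c + C (R := ℝ) d * X) * (C (R := ℝ) 2 * rescale y (exp ℝ))) := by
          simp only [map_mul]; ring
      _ = C (R := ℝ) (1 - mu) * ((C (R := ℝ) c + C (R := ℝ) d * X) * ((exp ℝ + 1) * PowerSeries.mk fun j => E j y / j.factorial)) := by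
          rw [hE y]
      _ = C (R := ℝ) (1 - mu) * (exp ℝ + 1) * ((C (R := ℝ) c + C (R := ℝ) d * X) * (PowerSeries.mk fun j => E j y / j.factorial)) := by
          ring
  have hc := congrArg (coeff (R := ℝ) n) hkey
  rw [coeff_mk, add_mul, map_add, coeff_C_mul, mul_assoc, coeff_C_mul, coeff_mk] at hc
  cases n with
  | zero =>
    rw [coeff_zero_X_mul] at hc
    simp only [Nat.factorial_zero, Nat.cast_one, div_one, mul_zero] at hc
    simpa using hc
  | succ j =>
    rw [coeff_succ_X_mul, coeff_mk] at hc
    have hfj : ((j.factorial : ℝ)) ≠ 0 := Nat.cast_ne_zero.mpr j.factorial_ne_zero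
    have hfj1 : (((j+1).factorial : ℝ)) ≠ 0 := Nat.cast_ne_zero.mpr (j+1).factorial_ne_zero
    have hfact : (((j+1).factorial : ℝ)) = ((j : ℝ) + 1) * j.factorial := by
      rw [Nat.factorial_succ]; push_cast; ring
    have hgoal : V (j+1) y = c * E (j+1) y + d * ((j : ℝ) + 1) * E j y := by
      have h2 : V (j+1) y =
          (c * (E (j+1) y / (((j+1).factorial : ℝ))) + d * (E j y / (j.factorial : ℝ)))
            * (((j+1).factorial : ℝ)) := by
        rw [← hc]
        field_simp
      rw [h2, hfact]
      field_simp
    simpa using hgoal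

theorem unified_raabe (mu : ℝ) (hmu1 : mu ≠ 1)
    (V : ℕ → ℝ → ℝ) (hV : IsUnifiedApostolBE (1 - mu) mu V)
    (E : ℕ → ℝ → ℝ) (hE : IsEulerPoly E)
    (m : ℕ) (hm : 0 < m) (hodd : Odd m) (n : ℕ) (x : ℝ) :
    ∑ k ∈ Finset.range m, (-1 : ℝ) ^ k * V n ((x + k) / m) =
      ((1 - m) / (m : ℝ) ^ n) * ((mu - 2) / (2 * (mu - 1))) * E n x +
        ((m : ℝ) / (m : ℝ) ^ n) * V n x := by
  have hm0 : (m : ℝ) ≠ 0 := Nat.cast_ne_zero.mpr hm.ne'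
  set c : ℝ := (mu - 2) / (2 * (mu - 1)) with hcdef
  set d : ℝ := mu / (4 * (1 - mu)) with hddef
  have hB := V_eq_euler mu hmu1 V hV E hE
  have hA := euler_mult E hE m hm hodd
  have expand : ∑ k ∈ Finset.range m, (-1 : ℝ) ^ k * V n ((x + k) / m)
      = c * (E n x / (m : ℝ) ^ n) + d * n * (E (n - 1) x / (m : ℝ) ^ (n - 1)) := by
    calc ∑ k ∈ Finset.range m, (-1 : ℝ) ^ k * V n ((x + k) / m)
        = ∑ k ∈ Finset.range m, (c * ((-1 : ℝ) ^ k * E n ((x + k) / m))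
            + d * n * ((-1 : ℝ) ^ k * E (n - 1) ((x + k) / m))) := by
          refine Finset.sum_congr rfl fun k _ => ?_
          rw [hB n ((x + k) / m)]
          ring
      _ = c * (∑ k ∈ Finset.range m, (-1 : ℝ) ^ k * E n ((x + k) / m))
            + d * n * (∑ k ∈ Finset.range m, (-1 : ℝ) ^ k * E (n - 1) ((x + k) / m)) := by
          rw [Finset.sum_add_distrib, ← Finset.mul_sum, ← Finset.mul_sum]
      _ = c * (E n x / (m : ℝ) ^ n) + d * n * (E (n - 1) x / (m : ℝ) ^ (n - 1)) := by
          rw [hA n x, hA (n - 1) x]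
  rw [expand, hB n x]
  cases n with
  | zero => simp; ring
  | succ j =>
    have hmn : ((m : ℝ)) ^ j ≠ 0 := pow_ne_zero _ hm0
    simp only [Nat.add_sub_cancel, pow_succ]
    push_cast
    have hmu1' : mu - 1 ≠ 0 := sub_ne_zero.mpr hmu1
    have hmu2' : 1 - mu ≠ 0 := sub_ne_zero.mpr (Ne.symm hmu1)
    rw [hcdef, hddef]
    field_simp
    ring
end

section
/- For λ > 0 and real μ ≠ 1 with λ + 1 − μ ≠ 0, λ ≠ 1 − μ, and every n ≥ 0 and real x: 𝔙_n(x;λ;μ) = (1/(1−μ)) · [ (1 − μ/2) 𝔈_n(x; λ/(1−μ)) − (μ/2) 𝔅_n(x; λ/(μ−1)) ]. -/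
open PowerSeries Finset

/-- `E n x` are the Apostol–Euler polynomials `𝔈_n(x;ν)`:
`2 e^{xt} = (ν e^t + 1) · Σ 𝔈_n(x;ν) t^n/n!` as formal power series over ℝ. -/
def IsApostolEuler (nu : ℝ) (E : ℕ → ℝ → ℝ) : Prop :=
  ∀ x : ℝ,
    (PowerSeries.C (R := ℝ) nu * PowerSeries.exp ℝ + 1) *
        PowerSeries.mk (fun n => E n x / n.factorial) =
      PowerSeries.C (R := ℝ) 2 * PowerSeries.rescale x (PowerSeries.exp ℝ)

/-- `B n x` are the Apostol–Bernoulli polynomials `𝔅_n(x;ν)`: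
`t e^{xt} = (ν e^t − 1) · Σ 𝔅_n(x;ν) t^n/n!` as formal power series over ℝ. -/
def IsApostolBernoulli (nu : ℝ) (B : ℕ → ℝ → ℝ) : Prop :=
  ∀ x : ℝ,
    (PowerSeries.C (R := ℝ) nu * PowerSeries.exp ℝ - 1) *
        PowerSeries.mk (fun n => B n x / n.factorial) =
      PowerSeries.X * PowerSeries.rescale x (PowerSeries.exp ℝ)

theorem unified_convex_combination (lam mu : ℝ) (hlam : 0 < lam) (hmu1 : mu ≠ 1)
    (hden : lam + 1 - mu ≠ 0) (hlam1 : lam ≠ 1 - mu)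
    (V : ℕ → ℝ → ℝ) (hV : IsUnifiedApostolBE lam mu V)
    (E : ℕ → ℝ → ℝ) (hE : IsApostolEuler (lam / (1 - mu)) E)
    (B : ℕ → ℝ → ℝ) (hB : IsApostolBernoulli (lam / (mu - 1)) B)
    (n : ℕ) (x : ℝ) :
    V n x = (1 / (1 - mu)) * ((1 - mu / 2) * E n x - (mu / 2) * B n x) := by
  have hm : (1:ℝ) - mu ≠ 0 := sub_ne_zero.mpr (Ne.symm hmu1)
  have hm' : mu - 1 ≠ 0 := sub_ne_zero.mpr hmu1
  set D : ℝ⟦X⟧ := PowerSeries.C (R := ℝ) lam * PowerSeries.exp ℝ + PowerSeries.C (R := ℝ) (1 - mu) with hDdef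
  have hD0 : D ≠ 0 := by
    intro h
    have h2 := congrArg (PowerSeries.constantCoeff (R := ℝ)) h
    simp [hDdef, PowerSeries.constantCoeff_exp] at h2
    apply hden
    linarith
  set a : ℝ := (1 / (1 - mu)) * (1 - mu / 2) with ha
  set b : ℝ := -((1 / (1 - mu)) * (mu / 2)) with hb
  have hDE : D * PowerSeries.mk (fun n => E n x / n.factorial)
      = PowerSeries.C (R := ℝ) (2 * (1 - mu)) * PowerSeries.rescale x (PowerSeries.exp ℝ) := by
    have hc : (1 - mu) * (lam / (1 - mu)) = lam := by field_simp
    have hD2 : D = PowerSeries.C (R := ℝ) (1 - mu) *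
        (PowerSeries.C (R := ℝ) (lam / (1 - mu)) * PowerSeries.exp ℝ + 1) := by
      rw [hDdef, mul_add, ← mul_assoc, ← map_mul, hc, mul_one]
    rw [hD2, mul_assoc, hE x, ← mul_assoc, ← map_mul]
    ring_nf
  have hDB : D * PowerSeries.mk (fun n => B n x / n.factorial)
      = PowerSeries.C (R := ℝ) (mu - 1) * (PowerSeries.X * PowerSeries.rescale x (PowerSeries.exp ℝ)) := by
    have hc : (mu - 1) * (lam / (mu - 1)) = lam := by field_simp
    have hD2 : D = PowerSeries.C (R := ℝ) (mu - 1) *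
        (PowerSeries.C (R := ℝ) (lam / (mu - 1)) * PowerSeries.exp ℝ - 1) := by
      rw [hDdef, mul_sub, ← mul_assoc, ← map_mul, hc, mul_one]
      rw [show (1 : ℝ) - mu = -(mu - 1) by ring, map_neg]
      ring
    rw [hD2, mul_assoc, hB x]
  have key : D * PowerSeries.mk (fun n => V n x / n.factorial)
      = D * (PowerSeries.C (R := ℝ) a * PowerSeries.mk (fun n => E n x / n.factorial)
           + PowerSeries.C (R := ℝ) b * PowerSeries.mk (fun n => B n x / n.factorial)) := by
    rw [hV x, mul_add, mul_left_comm D, mul_left_comm D, hDE, hDB,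
      ← mul_assoc, ← mul_assoc, ← map_mul, ← map_mul]
    have h1 : a * (2 * (1 - mu)) = 2 - mu := by rw [ha]; field_simp
    have h2 : b * (mu - 1) = mu / 2 := by rw [hb]; field_simp; ring
    rw [h1, h2]
    ring
  have hcan := mul_left_cancel₀ hD0 key
  have hco := congrArg (PowerSeries.coeff (R := ℝ) n) hcan
  simp only [PowerSeries.coeff_mk, map_add, PowerSeries.coeff_C_mul] at hco
  have hfac : (n.factorial : ℝ) ≠ 0 := Nat.cast_ne_zero.mpr n.factorial_ne_zero
  field_simp at hco ⊢
  rw [hco, ha, hb]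
  field_simp
  ring
end
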